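/- arXiv:1312.0157 — 3 statements merged into one kernel-verified Lean document; each statement's English description precedes it below -/
import Mathlib

section
/- For any positive semidefinite matrices Q₁, Q₂ with Q₁ ⪯ Q₂ (in the Loewner order), the Riccati map ρ(Q) = Φʷ + AQAᵀ − AQCᵀ(CQCᵀ + Φᵛ)⁻¹CQAᵀ satisfies ρ(Q₁) ⪯ ρ(Q₂), i.e., the Riccati map is monotone with respect to the Loewner order. -/
/-! For a fixed gain `L`, the map `Q ↦ Φw + (A - L C) Q (A - L C)ᵀ + L Φv Lᵀ` is affine in `Q` and
monotone in the Loewner order. Completing the square in `L` shows that it dominates `ρ(Q)`, with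
equality at the Kalman gain `K(Q) = A Q Cᵀ (C Q Cᵀ + Φv)⁻¹`. Hence
`ρ(Q₁) ⪯ Φw + (A - K(Q₂) C) Q₁ (A - K(Q₂) C)ᵀ + K(Q₂) Φv K(Q₂)ᵀ ⪯ ρ(Q₂)`. -/

open Matrix

/-- The Riccati map associated with system matrix `A`, sensor matrix `C`,
process noise covariance `Φw` and measurement noise covariance `Φv`. -/
noncomputable def riccati {n p : ℕ} (A : Matrix (Fin n) (Fin n) ℝ)
    (C : Matrix (Fin p) (Fin n) ℝ) (Φw : Matrix (Fin n) (Fin n) ℝ)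
    (Φv : Matrix (Fin p) (Fin p) ℝ) (Q : Matrix (Fin n) (Fin n) ℝ) :
    Matrix (Fin n) (Fin n) ℝ :=
  Φw + A * Q * Aᵀ - A * Q * Cᵀ * (C * Q * Cᵀ + Φv)⁻¹ * (C * Q * Aᵀ)

section Algebra

variable {R : Type*} [CommRing R] {l m n : Type*} [Fintype m] [Fintype n]

theorem matrix_completing_square (A : Matrix l n R) (C : Matrix m n R) (Q : Matrix n n R)
    (S : Matrix m m R) (K L : Matrix l m R) (hQ : Qᵀ = Q) (hS : Sᵀ = S)
    (hK : K * S = A * Q * Cᵀ) :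
    A * Q * Aᵀ - K * S * Kᵀ =
      (A - L * C) * Q * (A - L * C)ᵀ + L * (S - C * Q * Cᵀ) * Lᵀ - (L - K) * S * (L - K)ᵀ := by
  have hK' : S * Kᵀ = C * (Q * Aᵀ) := by
    rw [← hS, ← transpose_mul, hK]
    simp only [transpose_mul, transpose_transpose, hQ, Matrix.mul_assoc]
  have hKL : K * (S * Lᵀ) = A * (Q * (Cᵀ * Lᵀ)) := by
    rw [← Matrix.mul_assoc, hK, Matrix.mul_assoc, Matrix.mul_assoc]
  simp only [transpose_sub, transpose_mul, Matrix.sub_mul, Matrix.mul_sub, Matrix.mul_assoc,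
    hK', hKL]
  abel

def riccatiWithGain (A : Matrix n n R) (C : Matrix m n R) (Φw : Matrix n n R)
    (Φv : Matrix m m R) (L : Matrix n m R) (Q : Matrix n n R) : Matrix n n R :=
  Φw + (A - L * C) * Q * (A - L * C)ᵀ + L * Φv * Lᵀ

theorem riccatiWithGain_sub_riccatiWithGain (A : Matrix n n R) (C : Matrix m n R)
    (Φw : Matrix n n R) (Φv : Matrix m m R) (L : Matrix n m R) (Q₁ Q₂ : Matrix n n R) :
    riccatiWithGain A C Φw Φv L Q₂ - riccatiWithGain A C Φw Φv L Q₁ =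
      (A - L * C) * (Q₂ - Q₁) * (A - L * C)ᵀ := by
  simp only [riccatiWithGain, Matrix.mul_sub, Matrix.sub_mul]
  abel

end Algebra

section Real

variable {m n : Type*} [Fintype m] [Fintype n]

theorem Matrix.PosSemidef.mul_mul_transpose_same {Q : Matrix n n ℝ} (hQ : Q.PosSemidef)
    (B : Matrix m n ℝ) : (B * Q * Bᵀ).PosSemidef := by
  simpa only [conjTranspose_eq_transpose_of_trivial] using hQ.mul_mul_conjTranspose_same B

theorem riccatiWithGain_mono (A : Matrix n n ℝ) (C : Matrix m n ℝ) (Φw : Matrix n n ℝ)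
    (Φv : Matrix m m ℝ) (L : Matrix n m ℝ) {Q₁ Q₂ : Matrix n n ℝ} (hle : (Q₂ - Q₁).PosSemidef) :
    (riccatiWithGain A C Φw Φv L Q₂ - riccatiWithGain A C Φw Φv L Q₁).PosSemidef := by
  rw [riccatiWithGain_sub_riccatiWithGain]
  exact hle.mul_mul_transpose_same _

theorem posDef_innovation {C : Matrix m n ℝ} {Φv : Matrix m m ℝ} {Q : Matrix n n ℝ}
    (hΦv : Φv.PosDef) (hQ : Q.PosSemidef) : (C * Q * Cᵀ + Φv).PosDef :=
  PosDef.posSemidef_add (hQ.mul_mul_transpose_same C) hΦv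

variable [DecidableEq m]

noncomputable def kalmanGain (A : Matrix n n ℝ) (C : Matrix m n ℝ) (Φv : Matrix m m ℝ)
    (Q : Matrix n n ℝ) : Matrix n m ℝ :=
  A * Q * Cᵀ * (C * Q * Cᵀ + Φv)⁻¹

theorem kalmanGain_mul_innovation (A : Matrix n n ℝ) {C : Matrix m n ℝ} {Φv : Matrix m m ℝ}
    {Q : Matrix n n ℝ} (hΦv : Φv.PosDef) (hQ : Q.PosSemidef) :
    kalmanGain A C Φv Q * (C * Q * Cᵀ + Φv) = A * Q * Cᵀ :=
  nonsing_inv_mul_cancel_right _ _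
    ((isUnit_iff_isUnit_det _).mp (posDef_innovation hΦv hQ).isUnit)

end Real

section Riccati

variable {n p : ℕ} (A : Matrix (Fin n) (Fin n) ℝ) (C : Matrix (Fin p) (Fin n) ℝ)
  (Φw : Matrix (Fin n) (Fin n) ℝ) {Φv : Matrix (Fin p) (Fin p) ℝ} {Q : Matrix (Fin n) (Fin n) ℝ}

theorem riccati_eq_riccatiWithGain_sub (hΦv : Φv.PosDef) (hQ : Q.PosSemidef)
    (L : Matrix (Fin n) (Fin p) ℝ) :
    riccati A C Φw Φv Q = riccatiWithGain A C Φw Φv L Q -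
      (L - kalmanGain A C Φv Q) * (C * Q * Cᵀ + Φv) * (L - kalmanGain A C Φv Q)ᵀ := by
  have hQsymm : Qᵀ = Q := hQ.isHermitian.eq
  have hSsymm : (C * Q * Cᵀ + Φv)ᵀ = C * Q * Cᵀ + Φv := (posDef_innovation hΦv hQ).isHermitian.eq
  have hgain : kalmanGain A C Φv Q * (C * Q * Cᵀ + Φv) * (kalmanGain A C Φv Q)ᵀ =
      A * Q * Cᵀ * (C * Q * Cᵀ + Φv)⁻¹ * (C * Q * Aᵀ) := by
    rw [kalmanGain_mul_innovation A hΦv hQ, kalmanGain, transpose_mul, transpose_nonsing_inv,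
      hSsymm]
    simp only [transpose_mul, transpose_transpose, hQsymm, Matrix.mul_assoc]
  have hsquare := matrix_completing_square A C Q _ _ L hQsymm hSsymm
    (kalmanGain_mul_innovation A hΦv hQ)
  rw [add_sub_cancel_left, hgain] at hsquare
  rw [riccati, add_sub_assoc, hsquare, riccatiWithGain]
  abel

theorem riccati_le_riccatiWithGain (hΦv : Φv.PosDef) (hQ : Q.PosSemidef)
    (L : Matrix (Fin n) (Fin p) ℝ) :
    (riccatiWithGain A C Φw Φv L Q - riccati A C Φw Φv Q).PosSemidef := by
  rw [riccati_eq_riccatiWithGain_sub A C Φw hΦv hQ L, sub_sub_cancel]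
  exact (posDef_innovation hΦv hQ).posSemidef.mul_mul_transpose_same _

theorem riccati_eq_riccatiWithGain_kalmanGain (hΦv : Φv.PosDef) (hQ : Q.PosSemidef) :
    riccati A C Φw Φv Q = riccatiWithGain A C Φw Φv (kalmanGain A C Φv Q) Q := by
  simpa using riccati_eq_riccatiWithGain_sub A C Φw hΦv hQ (kalmanGain A C Φv Q)

end Riccati

theorem riccati_monotone_general {n p : ℕ} (A : Matrix (Fin n) (Fin n) ℝ)
    (C : Matrix (Fin p) (Fin n) ℝ) (Φw : Matrix (Fin n) (Fin n) ℝ)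
    (Φv : Matrix (Fin p) (Fin p) ℝ) (hΦv : Φv.PosDef)
    (Q₁ Q₂ : Matrix (Fin n) (Fin n) ℝ) (hQ₁ : Q₁.PosSemidef) (hQ₂ : Q₂.PosSemidef)
    (hle : (Q₂ - Q₁).PosSemidef) :
    (riccati A C Φw Φv Q₂ - riccati A C Φw Φv Q₁).PosSemidef := by
  have h := (riccatiWithGain_mono A C Φw Φv (kalmanGain A C Φv Q₂) hle).add
    (riccati_le_riccatiWithGain A C Φw hΦv hQ₁ (kalmanGain A C Φv Q₂))
  rwa [sub_add_sub_cancel, ← riccati_eq_riccatiWithGain_kalmanGain A C Φw hΦv hQ₂] at h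

/-- Monotonicity of the Riccati map in the Loewner order. -/
theorem riccati_monotone {n p : ℕ} (A : Matrix (Fin n) (Fin n) ℝ)
    (C : Matrix (Fin p) (Fin n) ℝ) (Φw : Matrix (Fin n) (Fin n) ℝ)
    (Φv : Matrix (Fin p) (Fin p) ℝ) (hΦw : Φw.PosSemidef) (hΦv : Φv.PosDef)
    (Q₁ Q₂ : Matrix (Fin n) (Fin n) ℝ) (hQ₁ : Q₁.PosSemidef) (hQ₂ : Q₂.PosSemidef)
    (hle : (Q₂ - Q₁).PosSemidef) :
    (riccati A C Φw Φv Q₂ - riccati A C Φw Φv Q₁).PosSemidef :=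
  riccati_monotone_general A C Φw Φv hΦv Q₁ Q₂ hQ₁ hQ₂ hle
end

section
/- Suppose for every schedule σ, every initial covariance φ, and every t, the perturbation bound Σₜ^σ(φ + εIₙ) ⪯ Σₜ^σ(φ) + ε·gₜ^σ(φ) holds with tr(gₜ^σ(φ)) ≤ αηᵗ for some constants α ≥ 0 and η ∈ (0,1), where gₜ^σ(φ) is positive semidefinite. Then if a schedule σ is feasible for some initial covariance φ₁ (i.e., its trajectory from φ₁ is bounded: Σₜ^σ(φ₁) ⪯ βIₙ for all t for some β < ∞), σ is feasible for every initial covariance φ, i.e., the trajectory from any φ is bounded. -/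
/-!
Since `φ₁` is positive semidefinite, `φ ⪯ φ₁ + tr(φ) I`; monotonicity and the perturbation bound
then give `Σₜ(φ) ⪯ Σₜ(φ₁) + tr(φ) gₜ(φ₁)`, and `gₜ(φ₁) ⪯ tr(gₜ(φ₁)) I ⪯ α I` because the largest
eigenvalue of a positive semidefinite matrix is at most its trace. The Loewner order is Mathlib's
`MatrixOrder`, where `A ≤ B` unfolds to `(B - A).PosSemidef`, the form of all hypotheses.
-/

open Matrix

open scoped Matrix.Norms.L2Operator

/-- The trajectory of the sequential Riccati mapping: `traj ρ σ φ t = Σₜ^σ(φ)`. -/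
def traj {n : ℕ} {M : ℕ} (ρ : Fin M → Matrix (Fin n) (Fin n) ℝ → Matrix (Fin n) (Fin n) ℝ)
    (σ : ℕ → Fin M) (φ : Matrix (Fin n) (Fin n) ℝ) : ℕ → Matrix (Fin n) (Fin n) ℝ
  | 0 => φ
  | t + 1 => ρ (σ t) (traj ρ σ φ t)

open scoped MatrixOrder

namespace Matrix.PosSemidef

variable {ι : Type*} [Fintype ι] [DecidableEq ι] {A : Matrix ι ι ℝ}

theorem le_trace_smul_one (hA : A.PosSemidef) : A ≤ A.trace • (1 : Matrix ι ι ℝ) := by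
  rw [← Algebra.algebraMap_eq_smul_one]
  refine le_algebraMap_of_spectrum_le (fun x hx => ?_) hA.1.isSelfAdjoint
  obtain ⟨i, rfl⟩ : x ∈ Set.range hA.1.eigenvalues := hA.1.spectrum_real_eq_range_eigenvalues ▸ hx
  rw [hA.1.trace_eq_sum_eigenvalues]
  exact Finset.single_le_sum (fun j _ => hA.eigenvalues_nonneg j) (Finset.mem_univ i)

theorem le_smul_one_of_trace_le (hA : A.PosSemidef) {c : ℝ} (hc : A.trace ≤ c) :
    A ≤ c • (1 : Matrix ι ι ℝ) :=
  hA.le_trace_smul_one.trans (smul_le_smul_of_nonneg_right hc PosSemidef.one.nonneg)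

end Matrix.PosSemidef

/-- If a schedule is feasible for some initial covariance, then it is feasible for
every initial covariance. -/
theorem feasible_of_feasible_some {n M : ℕ}
    (ρ : Fin M → Matrix (Fin n) (Fin n) ℝ → Matrix (Fin n) (Fin n) ℝ)
    -- monotonicity of the composite maps in the Loewner order
    (h_mono : ∀ (σ : ℕ → Fin M) (φ₁ φ₂ : Matrix (Fin n) (Fin n) ℝ), φ₁.PosSemidef →
      φ₂.PosSemidef → (φ₂ - φ₁).PosSemidef →
      ∀ t : ℕ, (traj ρ σ φ₂ t - traj ρ σ φ₁ t).PosSemidef)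
    -- the directional derivative `g` with its perturbation bound
    (g : (ℕ → Fin M) → Matrix (Fin n) (Fin n) ℝ → ℕ → Matrix (Fin n) (Fin n) ℝ)
    (hg_psd : ∀ σ φ t, φ.PosSemidef → (g σ φ t).PosSemidef)
    (h_pert : ∀ (σ : ℕ → Fin M) (φ : Matrix (Fin n) (Fin n) ℝ), φ.PosSemidef →
      ∀ (ε : ℝ), 0 ≤ ε → ∀ t : ℕ,
      (traj ρ σ φ t + ε • g σ φ t - traj ρ σ (φ + ε • (1 : Matrix (Fin n) (Fin n) ℝ)) t).PosSemidef)
    -- exponential decay of the trace of `g`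
    (h_exp : ∀ (σ : ℕ → Fin M) (φ : Matrix (Fin n) (Fin n) ℝ), φ.PosSemidef →
      ∃ α : ℝ, 0 ≤ α ∧ ∃ η ∈ Set.Ioo (0 : ℝ) 1, ∀ t : ℕ, (g σ φ t).trace ≤ α * η ^ t)
    (σ : ℕ → Fin M) (φ₁ : Matrix (Fin n) (Fin n) ℝ) (hφ₁ : φ₁.PosSemidef)
    -- feasibility of `σ` for `φ₁`
    (hfeas : ∃ β : ℝ, ∀ t : ℕ,
      (β • (1 : Matrix (Fin n) (Fin n) ℝ) - traj ρ σ φ₁ t).PosSemidef) :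
    ∀ (φ : Matrix (Fin n) (Fin n) ℝ), φ.PosSemidef →
      ∃ β : ℝ, ∀ t : ℕ,
        (β • (1 : Matrix (Fin n) (Fin n) ℝ) - traj ρ σ φ t).PosSemidef := by
  intro φ hφ
  obtain ⟨β, hβ⟩ := hfeas
  obtain ⟨α, hα, η, hη, hg_trace⟩ := h_exp σ φ₁ hφ₁
  set ε := φ.trace
  have hε : 0 ≤ ε := hφ.trace_nonneg
  have hφ_le : φ ≤ φ₁ + ε • 1 := le_add_of_nonneg_of_le hφ₁.nonneg hφ.le_trace_smul_one
  refine ⟨β + ε * α, fun t => ?_⟩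
  have hg : g σ φ₁ t ≤ α • 1 := (hg_psd σ φ₁ t hφ₁).le_smul_one_of_trace_le <|
    (hg_trace t).trans (mul_le_of_le_one_right hα (pow_le_one₀ hη.1.le hη.2.le))
  change traj ρ σ φ t ≤ (β + ε * α) • 1
  calc traj ρ σ φ t
      ≤ traj ρ σ (φ₁ + ε • 1) t := h_mono σ φ _ hφ (hφ₁.add (PosSemidef.one.smul hε)) hφ_le t
    _ ≤ traj ρ σ φ₁ t + ε • g σ φ₁ t := h_pert σ φ₁ hφ₁ ε hε t
    _ ≤ β • 1 + ε • (α • 1) := add_le_add (hβ t) (smul_le_smul_of_nonneg_left hg hε)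
    _ = (β + ε * α) • 1 := by module
end

section
/- Under the exponential sensitivity hypothesis (Σₜ^σ(φ + εIₙ) ⪯ Σₜ^σ(φ) + ε gₜ^σ(φ) with 0 ⪯ gₜ^σ(φ) and tr(gₜ^σ(φ)) ≤ αηᵗ, η ∈ (0,1)), if σ is a feasible schedule then for any two initial covariances φ₁, φ₂, the trajectories converge to each other exponentially: ‖Σₜ^σ(φ₁) − Σₜ^σ(φ₂)‖ ≤ C·ηᵗ for some constant C depending on φ₁, φ₂ but not on t; in particular ‖Σₜ^σ(φ₁) − Σₜ^σ(φ₂)‖ → 0 as t → ∞. -/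
/-!
Monotonicity and exponential sensitivity give, for `ε` dominating `‖φ₁‖` and `‖φ₂‖`,
`Σₜ(φ₁) ⪯ Σₜ(φ₂ + εI) ⪯ Σₜ(φ₂) + ε gₜ(φ₂)` and symmetrically, so the difference
`Dₜ = Σₜ(φ₁) - Σₜ(φ₂)` is sandwiched as `-ε gₜ(φ₁) ⪯ Dₜ ⪯ ε gₜ(φ₂)`. For positive semidefinite
matrices the operator norm is at most the trace, so `‖Dₜ‖` is bounded by traces of `gₜ`, which
decay geometrically.
-/

open Matrix

open scoped Matrix.Norms.L2Operator

open scoped ComplexOrder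

namespace Matrix

variable {𝕜 ι : Type*} [RCLike 𝕜] [Fintype ι] [DecidableEq ι] {A : Matrix ι ι 𝕜}

lemma IsHermitian.l2_opNorm_eq (hA : A.IsHermitian) :
    ‖A‖ = ‖(RCLike.ofReal ∘ hA.eigenvalues : ι → 𝕜)‖ := by
  conv_lhs => rw [hA.spectral_theorem]
  rw [Unitary.conjStarAlgAut_apply, ← Unitary.coe_star, CStarRing.norm_mul_coe_unitary,
    CStarRing.norm_coe_unitary_mul, l2_opNorm_diagonal]

lemma IsHermitian.eigenvalues_le_l2_opNorm (hA : A.IsHermitian) (i : ι) :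
    hA.eigenvalues i ≤ ‖A‖ := by
  rw [hA.l2_opNorm_eq]
  exact (le_abs_self _).trans
    (by simpa using norm_le_pi_norm (RCLike.ofReal ∘ hA.eigenvalues : ι → 𝕜) i)

lemma IsHermitian.posSemidef_smul_one_sub (hA : A.IsHermitian) {c : ℝ}
    (hc : ∀ i, hA.eigenvalues i ≤ c) : (c • (1 : Matrix ι ι 𝕜) - A).PosSemidef := by
  have hdiag : diagonal (fun i => ((c - hA.eigenvalues i : ℝ) : 𝕜))
      = c • (1 : Matrix ι ι 𝕜) - diagonal (RCLike.ofReal ∘ hA.eigenvalues) := by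
    ext i j
    rcases eq_or_ne i j with rfl | hij
    · simp [RCLike.real_smul_eq_coe_mul]
    · simp [hij]
  have h : c • (1 : Matrix ι ι 𝕜) - A = Unitary.conjStarAlgAut 𝕜 _ hA.eigenvectorUnitary
      (diagonal fun i => ((c - hA.eigenvalues i : ℝ) : 𝕜)) := by
    conv_lhs => rw [hA.spectral_theorem]
    rw [hdiag, map_sub, Unitary.conjStarAlgAut_apply, Unitary.conjStarAlgAut_apply]
    simp
  rw [h, Unitary.conjStarAlgAut_apply]
  exact (PosSemidef.diagonal fun i => by simpa using hc i).mul_mul_conjTranspose_same _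

lemma PosSemidef.l2_opNorm_le_trace (hA : A.PosSemidef) : ‖A‖ ≤ RCLike.re A.trace := by
  rw [hA.isHermitian.l2_opNorm_eq, hA.isHermitian.trace_eq_sum_eigenvalues, map_sum]
  have hev := hA.eigenvalues_nonneg
  refine (pi_norm_le_iff_of_nonneg (by simpa using Finset.sum_nonneg fun i _ => hev i)).mpr
    fun i => ?_
  simp only [Function.comp_apply, RCLike.norm_ofReal, RCLike.ofReal_re, abs_of_nonneg (hev i)]
  exact Finset.single_le_sum (fun j _ => hev j) (Finset.mem_univ i)

lemma PosSemidef.add_smul_one_sub {B : Matrix ι ι 𝕜} (hB : B.PosSemidef) (hA : A.IsHermitian)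
    {c : ℝ} (hc : ‖A‖ ≤ c) : (B + c • (1 : Matrix ι ι 𝕜) - A).PosSemidef := by
  rw [add_sub_assoc]
  exact hB.add (hA.posSemidef_smul_one_sub fun i => (hA.eigenvalues_le_l2_opNorm i).trans hc)

lemma norm_le_of_posSemidef_add_of_posSemidef_sub {B D : Matrix ι ι 𝕜} (hA : A.PosSemidef)
    (hDA : (D + A).PosSemidef) (hBD : (B - D).PosSemidef) :
    ‖D‖ ≤ 2 * RCLike.re A.trace + RCLike.re B.trace := by
  have hBD_trace : 0 ≤ RCLike.re (B - D).trace := (norm_nonneg _).trans hBD.l2_opNorm_le_trace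
  rw [trace_sub, map_sub] at hBD_trace
  calc ‖D‖ = ‖(D + A) - A‖ := by rw [add_sub_cancel_right]
    _ ≤ ‖D + A‖ + ‖A‖ := norm_sub_le _ _
    _ ≤ RCLike.re (D + A).trace + RCLike.re A.trace :=
      add_le_add hDA.l2_opNorm_le_trace hA.l2_opNorm_le_trace
    _ ≤ 2 * RCLike.re A.trace + RCLike.re B.trace := by
      rw [trace_add, map_add]
      linarith

end Matrix

section Trajectory

variable {n M : ℕ} {ρ : Fin M → Matrix (Fin n) (Fin n) ℝ → Matrix (Fin n) (Fin n) ℝ}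
  {σ : ℕ → Fin M} {g : Matrix (Fin n) (Fin n) ℝ → ℕ → Matrix (Fin n) (Fin n) ℝ}

lemma traj_posSemidef_add_smul_sub
    (h_mono : ∀ φ₁ φ₂ : Matrix (Fin n) (Fin n) ℝ, φ₁.PosSemidef → φ₂.PosSemidef →
      (φ₂ - φ₁).PosSemidef → ∀ t, (traj ρ σ φ₂ t - traj ρ σ φ₁ t).PosSemidef)
    (h_pert : ∀ φ : Matrix (Fin n) (Fin n) ℝ, φ.PosSemidef → ∀ ε : ℝ, 0 ≤ ε → ∀ t,
      (traj ρ σ φ t + ε • g φ t - traj ρ σ (φ + ε • (1 : Matrix (Fin n) (Fin n) ℝ)) t).PosSemidef)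
    {φ ψ : Matrix (Fin n) (Fin n) ℝ} (hφ : φ.PosSemidef) (hψ : ψ.PosSemidef) {ε : ℝ}
    (hε : 0 ≤ ε) (hle : (ψ + ε • (1 : Matrix (Fin n) (Fin n) ℝ) - φ).PosSemidef) (t : ℕ) :
    (traj ρ σ ψ t + ε • g ψ t - traj ρ σ φ t).PosSemidef := by
  have h := (h_pert ψ hψ ε hε t).add
    (h_mono φ _ hφ (hψ.add (PosSemidef.one.smul hε)) hle t)
  convert h using 1
  abel

lemma norm_traj_sub_le_trace
    (h_mono : ∀ φ₁ φ₂ : Matrix (Fin n) (Fin n) ℝ, φ₁.PosSemidef → φ₂.PosSemidef →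
      (φ₂ - φ₁).PosSemidef → ∀ t, (traj ρ σ φ₂ t - traj ρ σ φ₁ t).PosSemidef)
    (h_pert : ∀ φ : Matrix (Fin n) (Fin n) ℝ, φ.PosSemidef → ∀ ε : ℝ, 0 ≤ ε → ∀ t,
      (traj ρ σ φ t + ε • g φ t - traj ρ σ (φ + ε • (1 : Matrix (Fin n) (Fin n) ℝ)) t).PosSemidef)
    {φ₁ φ₂ : Matrix (Fin n) (Fin n) ℝ} (hφ₁ : φ₁.PosSemidef) (hφ₂ : φ₂.PosSemidef)
    (hg₁ : ∀ t, (g φ₁ t).PosSemidef) {ε : ℝ} (hε₁ : ‖φ₁‖ ≤ ε) (hε₂ : ‖φ₂‖ ≤ ε) (t : ℕ) :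
    ‖traj ρ σ φ₁ t - traj ρ σ φ₂ t‖ ≤ ε * (2 * (g φ₁ t).trace + (g φ₂ t).trace) := by
  have hε : 0 ≤ ε := (norm_nonneg _).trans hε₁
  have lower := traj_posSemidef_add_smul_sub h_mono h_pert hφ₂ hφ₁ hε
    (hφ₁.add_smul_one_sub hφ₂.isHermitian hε₂) t
  have upper := traj_posSemidef_add_smul_sub h_mono h_pert hφ₁ hφ₂ hε
    (hφ₂.add_smul_one_sub hφ₁.isHermitian hε₁) t
  have h := norm_le_of_posSemidef_add_of_posSemidef_sub ((hg₁ t).smul hε)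
    (D := traj ρ σ φ₁ t - traj ρ σ φ₂ t) (B := ε • g φ₂ t)
    (by rwa [sub_add_eq_add_sub]) (by rwa [sub_sub_eq_add_sub, add_comm])
  simp only [trace_smul, smul_eq_mul, RCLike.re_to_real] at h
  linarith

end Trajectory

theorem traj_exponential_convergence_general {n M : ℕ}
    (ρ : Fin M → Matrix (Fin n) (Fin n) ℝ → Matrix (Fin n) (Fin n) ℝ)
    (h_mono : ∀ (σ : ℕ → Fin M) (φ₁ φ₂ : Matrix (Fin n) (Fin n) ℝ), φ₁.PosSemidef →
      φ₂.PosSemidef → (φ₂ - φ₁).PosSemidef →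
      ∀ t : ℕ, (traj ρ σ φ₂ t - traj ρ σ φ₁ t).PosSemidef)
    (g : (ℕ → Fin M) → Matrix (Fin n) (Fin n) ℝ → ℕ → Matrix (Fin n) (Fin n) ℝ)
    (hg_psd : ∀ σ φ t, φ.PosSemidef → (g σ φ t).PosSemidef)
    (h_pert : ∀ (σ : ℕ → Fin M) (φ : Matrix (Fin n) (Fin n) ℝ), φ.PosSemidef →
      ∀ (ε : ℝ), 0 ≤ ε → ∀ t : ℕ,
      (traj ρ σ φ t + ε • g σ φ t - traj ρ σ (φ + ε • (1 : Matrix (Fin n) (Fin n) ℝ)) t).PosSemidef)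
    (h_exp : ∀ (σ : ℕ → Fin M) (φ : Matrix (Fin n) (Fin n) ℝ), φ.PosSemidef →
      ∃ α : ℝ, 0 ≤ α ∧ ∃ η ∈ Set.Ioo (0 : ℝ) 1, ∀ t : ℕ, (g σ φ t).trace ≤ α * η ^ t)
    (σ : ℕ → Fin M)
    (φ₁ φ₂ : Matrix (Fin n) (Fin n) ℝ) (hφ₁ : φ₁.PosSemidef) (hφ₂ : φ₂.PosSemidef) :
    (∃ C : ℝ, 0 ≤ C ∧ ∃ η ∈ Set.Ioo (0 : ℝ) 1, ∀ t : ℕ,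
        ‖traj ρ σ φ₁ t - traj ρ σ φ₂ t‖ ≤ C * η ^ t) ∧
      Filter.Tendsto (fun t => ‖traj ρ σ φ₁ t - traj ρ σ φ₂ t‖)
        Filter.atTop (nhds 0) := by
  obtain ⟨α₁, hα₁, η₁, hη₁, hg₁⟩ := h_exp σ φ₁ hφ₁
  obtain ⟨α₂, hα₂, η₂, hη₂, hg₂⟩ := h_exp σ φ₂ hφ₂
  set ε := max ‖φ₁‖ ‖φ₂‖
  set η := max η₁ η₂
  have hε : 0 ≤ ε := le_max_of_le_left (norm_nonneg _)
  have hη : η ∈ Set.Ioo (0 : ℝ) 1 := ⟨lt_max_of_lt_left hη₁.1, max_lt hη₁.2 hη₂.2⟩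
  have hbound : ∀ t, ‖traj ρ σ φ₁ t - traj ρ σ φ₂ t‖ ≤ ε * (2 * α₁ + α₂) * η ^ t := fun t =>
    calc ‖traj ρ σ φ₁ t - traj ρ σ φ₂ t‖
        ≤ ε * (2 * (g σ φ₁ t).trace + (g σ φ₂ t).trace) :=
          norm_traj_sub_le_trace (h_mono σ) (h_pert σ) hφ₁ hφ₂ (fun t => hg_psd σ φ₁ t hφ₁)
            (le_max_left _ _) (le_max_right _ _) t
      _ ≤ ε * (2 * (α₁ * η ^ t) + α₂ * η ^ t) := by
          gcongr
          · exact (hg₁ t).trans (by gcongr; exacts [hη₁.1.le, le_max_left _ _])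
          · exact (hg₂ t).trans (by gcongr; exacts [hη₂.1.le, le_max_right _ _])
      _ = ε * (2 * α₁ + α₂) * η ^ t := by ring
  refine ⟨⟨_, mul_nonneg hε (by linarith), η, hη, hbound⟩, ?_⟩
  have hgeom := (tendsto_pow_atTop_nhds_zero_of_lt_one hη.1.le hη.2).const_mul (ε * (2 * α₁ + α₂))
  rw [mul_zero] at hgeom
  exact squeeze_zero (fun _ => norm_nonneg _) hbound hgeom

/-- Under a feasible schedule, trajectories starting from any two initial
covariances converge to each other exponentially. -/
theorem traj_exponential_convergence {n M : ℕ}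
    (ρ : Fin M → Matrix (Fin n) (Fin n) ℝ → Matrix (Fin n) (Fin n) ℝ)
    (h_mono : ∀ (σ : ℕ → Fin M) (φ₁ φ₂ : Matrix (Fin n) (Fin n) ℝ), φ₁.PosSemidef →
      φ₂.PosSemidef → (φ₂ - φ₁).PosSemidef →
      ∀ t : ℕ, (traj ρ σ φ₂ t - traj ρ σ φ₁ t).PosSemidef)
    (g : (ℕ → Fin M) → Matrix (Fin n) (Fin n) ℝ → ℕ → Matrix (Fin n) (Fin n) ℝ)
    (hg_psd : ∀ σ φ t, φ.PosSemidef → (g σ φ t).PosSemidef)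
    (h_pert : ∀ (σ : ℕ → Fin M) (φ : Matrix (Fin n) (Fin n) ℝ), φ.PosSemidef →
      ∀ (ε : ℝ), 0 ≤ ε → ∀ t : ℕ,
      (traj ρ σ φ t + ε • g σ φ t - traj ρ σ (φ + ε • (1 : Matrix (Fin n) (Fin n) ℝ)) t).PosSemidef)
    (h_exp : ∀ (σ : ℕ → Fin M) (φ : Matrix (Fin n) (Fin n) ℝ), φ.PosSemidef →
      ∃ α : ℝ, 0 ≤ α ∧ ∃ η ∈ Set.Ioo (0 : ℝ) 1, ∀ t : ℕ, (g σ φ t).trace ≤ α * η ^ t)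
    (σ : ℕ → Fin M)
    -- feasibility of `σ`: bounded trajectories from every initial covariance
    (hfeas : ∀ (φ : Matrix (Fin n) (Fin n) ℝ), φ.PosSemidef →
      ∃ β : ℝ, ∀ t : ℕ,
        (β • (1 : Matrix (Fin n) (Fin n) ℝ) - traj ρ σ φ t).PosSemidef)
    (φ₁ φ₂ : Matrix (Fin n) (Fin n) ℝ) (hφ₁ : φ₁.PosSemidef) (hφ₂ : φ₂.PosSemidef) :
    (∃ C : ℝ, 0 ≤ C ∧ ∃ η ∈ Set.Ioo (0 : ℝ) 1, ∀ t : ℕ,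
        ‖traj ρ σ φ₁ t - traj ρ σ φ₂ t‖ ≤ C * η ^ t) ∧
      Filter.Tendsto (fun t => ‖traj ρ σ φ₁ t - traj ρ σ φ₂ t‖)
        Filter.atTop (nhds 0) :=
  traj_exponential_convergence_general ρ h_mono g hg_psd h_pert h_exp σ φ₁ φ₂ hφ₁ hφ₂
end
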